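/- In the poset IX of closed intervals of a globally hyperbolic poset X ordered by reverse inclusion, the way-below relation is characterized by: [a,b] ≪ [c,d] iff a ≪ c in X and d ≪ b in X; moreover IX is a continuous dcpo. -/

import Mathlib

open Set

/-- `a` is way below `x`. -/
def wayBelow {α : Type*} [Preorder α] (a x : α) : Prop :=
  ∀ S : Set α, S.Nonempty → DirectedOn (· ≤ ·) S → ∀ d, IsLUB S d → x ≤ d →
    ∃ s ∈ S, a ≤ s

/-- A poset is continuous if every element is the supremum of a directed set
of elements way below it. -/
def ContinuousPoset (α : Type*) [Preorder α] : Prop :=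
  ∀ x : α, ∃ S : Set α, S ⊆ {a | wayBelow a x} ∧ S.Nonempty ∧
    DirectedOn (· ≤ ·) S ∧ IsLUB S x

/-- A basis for a continuous poset. -/
def PosetBasis {α : Type*} [Preorder α] (B : Set α) : Prop :=
  ∀ x : α, ∃ S : Set α, S ⊆ B ∩ {a | wayBelow a x} ∧ S.Nonempty ∧
    DirectedOn (· ≤ ·) S ∧ IsLUB S x

/-- Scott open sets: upper sets inaccessible by directed suprema. -/
def ScottOpen {α : Type*} [Preorder α] (U : Set α) : Prop :=
  IsUpperSet U ∧ ∀ S : Set α, S.Nonempty → DirectedOn (· ≤ ·) S → ∀ d, IsLUB S d →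
    d ∈ U → (S ∩ U).Nonempty

/-- The Scott topology. -/
def scottTop (α : Type*) [Preorder α] : TopologicalSpace α :=
  TopologicalSpace.generateFrom {U | ScottOpen U}

/-- A bicontinuous poset. -/
def Bicontinuous (α : Type*) [Preorder α] : Prop :=
  ContinuousPoset α ∧
  (∀ x y : α, wayBelow x y ↔
    ∀ S : Set α, S.Nonempty → DirectedOn (· ≥ ·) S → ∀ i, IsGLB S i → i ≤ x →
      ∃ s ∈ S, s ≤ y) ∧
  (∀ x : α, DirectedOn (· ≥ ·) {y | wayBelow x y} ∧ IsGLB {y | wayBelow x y} x)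

/-- The basic open intervals `(a,b) = {x | a ≪ x ≪ b}`. -/
def intervalBasis (α : Type*) [Preorder α] : Set (Set α) :=
  {s | ∃ a b : α, s = {x | wayBelow a x ∧ wayBelow x b}}

/-- The interval topology, generated by the sets `(a,b)`. -/
def intervalTop (α : Type*) [Preorder α] : TopologicalSpace α :=
  TopologicalSpace.generateFrom (intervalBasis α)

/-- A globally hyperbolic poset: bicontinuous, with compact closed intervals. -/
def GloballyHyperbolic (α : Type*) [PartialOrder α] : Prop :=
  Bicontinuous α ∧ ∀ a b : α, @IsCompact α (intervalTop α) (Set.Icc a b)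

/-- The poset of closed intervals `[a,b]`, `a ≤ b`, under reverse inclusion. -/
def IX (α : Type*) [PartialOrder α] := {p : α × α // p.1 ≤ p.2}

instance IX.instPartialOrder {α : Type*} [PartialOrder α] : PartialOrder (IX α) where
  le x y := x.1.1 ≤ y.1.1 ∧ y.1.2 ≤ x.1.2
  le_refl x := ⟨le_refl _, le_refl _⟩
  le_trans x y z h1 h2 := ⟨h1.1.trans h2.1, h2.2.trans h1.2⟩
  le_antisymm x y h1 h2 :=
    Subtype.ext (Prod.ext_iff.mpr ⟨le_antisymm h1.1 h2.1, le_antisymm h2.2 h1.2⟩)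

section Rel

variable {β : Type*}

/-- Directedness with respect to an arbitrary relation. -/
def relDirectedOn (r : β → β → Prop) (S : Set β) : Prop :=
  ∀ x ∈ S, ∀ y ∈ S, ∃ z ∈ S, r x z ∧ r y z

/-- Least upper bound with respect to an arbitrary relation. -/
def relIsLUB (r : β → β → Prop) (S : Set β) (d : β) : Prop :=
  (∀ s ∈ S, r s d) ∧ ∀ u, (∀ s ∈ S, r s u) → r d u

/-- The way-below relation with respect to an arbitrary relation. -/
def relWayBelow (r : β → β → Prop) (a x : β) : Prop :=
  ∀ S : Set β, S.Nonempty → relDirectedOn r S → ∀ d, relIsLUB r S d → r x d →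
    ∃ s ∈ S, r a s

/-- An abstract basis: a transitive relation, interpolative from the `-` direction. -/
def AbstractBasis (r : β → β → Prop) : Prop :=
  Transitive r ∧ ∀ (F : Finset β) (x : β), (∀ y ∈ F, r y x) →
    ∃ z, (∀ y ∈ F, r y z) ∧ r z x

/-- Interpolation in the `+` direction. -/
def PlusInterpolative (r : β → β → Prop) : Prop :=
  ∀ (F : Finset β) (x : β), (∀ y ∈ F, r x y) → ∃ z, r x z ∧ (∀ y ∈ F, r z y)

/-- An ideal: a nonempty directed lower set. -/
def IsIdeal (r : β → β → Prop) (I : Set β) : Prop :=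
  I.Nonempty ∧ (∀ x y, r x y → y ∈ I → x ∈ I) ∧
    ∀ x ∈ I, ∀ y ∈ I, ∃ z ∈ I, r x z ∧ r y z

/-- The ideal completion: ideals ordered by inclusion. -/
def IdealCompletion (r : β → β → Prop) := {I : Set β // IsIdeal r I}

instance IdealCompletion.instPartialOrder {β : Type*} (r : β → β → Prop) :
    PartialOrder (IdealCompletion r) where
  le I J := I.1 ⊆ J.1
  le_refl I := subset_rfl
  le_trans I J K h1 h2 := Set.Subset.trans h1 h2
  le_antisymm I J h1 h2 := Subtype.ext (Set.Subset.antisymm h1 h2)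

end Rel

/-- The order on maximal elements induced by interval endpoints. -/
def maxLe {α : Type*} (left right : α → α) (a b : α) : Prop :=
  ∃ x, left x = a ∧ right x = b

/-- An interval poset. -/
structure IntervalPoset (α : Type*) [PartialOrder α] where
  left : α → α
  right : α → α
  left_max : ∀ x, IsMax (left x)
  right_max : ∀ x, IsMax (right x)
  glb : ∀ x, IsGLB {left x, right x} x
  glue : ∀ x y, right x = left y →
    ∃ z, IsGLB {x, y} z ∧ left z = left x ∧ right z = right y
  sub_left : ∀ x p, IsMax p → x ≤ p →
    ∃ z, IsGLB {left x, p} z ∧ left z = left x ∧ right z = p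
  sub_right : ∀ x p, IsMax p → x ≤ p →
    ∃ z, IsGLB {p, right x} z ∧ left z = p ∧ right z = right x

/-- An interval domain. -/
structure IntervalDomain (α : Type*) [PartialOrder α] extends IntervalPoset α where
  dcpo : ∀ S : Set α, S.Nonempty → DirectedOn (· ≤ ·) S → ∃ d, IsLUB S d
  cont : ContinuousPoset α
  ax1 : ∀ x p, IsMax p → wayBelow x p →
    (∀ z, IsGLB {left x, p} z → ∃ u, wayBelow z u) ∧
    (∀ z, IsGLB {p, right x} z → ∃ u, wayBelow z u)
  ax2b : ∀ x : α, (∃ u, wayBelow x u) ↔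
    (∀ y, left y = left x → y ≤ x →
      relWayBelow (fun u v => u ≤ v ∧ right u = right y ∧ right v = right y) y (right y))
  ax2c : ∀ x : α, (∃ u, wayBelow x u) ↔
    (∀ y, right y = right x → y ≤ x →
      relWayBelow (fun u v => u ≤ v ∧ left u = left y ∧ left v = left y) y (left y))
  ax3a : ∀ (p : α) (S : Set α), S.Nonempty → S ⊆ {z | left z = p} →
    DirectedOn (· ≤ ·) S → ∀ u, IsLUB S u →
      left u = p ∧ ∀ (q : α) (T : Set α), T.Nonempty → T ⊆ {z | left z = q} →
        DirectedOn (· ≤ ·) T → ∀ v, IsLUB T v → right '' T = right '' S →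
          right u = right v
  ax3b : ∀ (q : α) (S : Set α), S.Nonempty → S ⊆ {z | right z = q} →
    DirectedOn (· ≤ ·) S → ∀ u, IsLUB S u →
      right u = q ∧ ∀ (p : α) (T : Set α), T.Nonempty → T ⊆ {z | right z = p} →
        DirectedOn (· ≤ ·) T → ∀ v, IsLUB T v → left '' T = left '' S →
          left u = left v
  ax4 : ∀ x : α, @IsCompact α (scottTop α) ({y | x ≤ y} ∩ {y | IsMax y})

/-!
In the interval topology of a bicontinuous poset the principal up- and down-sets are closed. With
compact closed intervals, a nonempty directed set that is bounded above then has a supremum, namely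
any cluster point of the directed net; dually for filtered sets bounded below. So a directed family
of intervals has its supremum in `IX α` computed endpoint-wise, as the supremum of the left and the
infimum of the right endpoints. Way-below in `IX α` therefore splits into `≪` on the left endpoints
and, on the right endpoints, the dual relation defined by filtered infima, which bicontinuity
identifies with `≪`. A directed family of intervals `[a, b]` with `a ≪ c` and `d ≪ b` has
supremum `[c, d]`.
-/

open Topology Filter

section WayBelow

variable {α : Type*} [Preorder α] {a a' x x' : α}

theorem wayBelow.le (h : wayBelow a x) : a ≤ x := by
  obtain ⟨s, rfl, hs⟩ :=
    h {x} (singleton_nonempty x) (directedOn_singleton x) x isLUB_singleton le_rfl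
  exact hs

theorem wayBelow.mono (ha : a' ≤ a) (h : wayBelow a x) (hx : x ≤ x') : wayBelow a' x' :=
  fun S hne hdir d hd hxd =>
    (h S hne hdir d hd (hx.trans hxd)).imp fun _ ⟨hs, has⟩ => ⟨hs, ha.trans has⟩

theorem isOpen_intervalTop_of_forall {U : Set α}
    (hU : ∀ x ∈ U, ∃ a b, wayBelow a x ∧ wayBelow x b ∧ ∀ y, wayBelow a y → wayBelow y b → y ∈ U) :
    IsOpen[intervalTop α] U := by
  let _ := intervalTop α
  refine isOpen_iff_forall_mem_open.2 fun x hx => ?_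
  obtain ⟨a, b, hax, hxb, hsub⟩ := hU x hx
  exact ⟨_, fun y hy => hsub y hy.1 hy.2,
    TopologicalSpace.isOpen_generateFrom_of_mem ⟨a, b, rfl⟩, hax, hxb⟩

end WayBelow

namespace Bicontinuous

variable {α : Type*} [Preorder α]

theorem exists_wayBelow (h : Bicontinuous α) (x : α) : ∃ q, wayBelow x q := by
  by_contra! hnone
  have hx_top : ∀ z, z ≤ x := fun z => (h.2.2 x).2.2 fun y hy => (hnone y hy).elim
  exact hnone x ((h.2.1 x x).2 fun S ⟨s, hs⟩ _ _ _ _ => ⟨s, hs, hx_top s⟩)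

theorem isClosed_Ici (h : Bicontinuous α) (d : α) : IsClosed[intervalTop α] (Ici d) := by
  let _ := intervalTop α
  refine isOpen_compl_iff.1 (isOpen_intervalTop_of_forall fun x (hx : ¬ d ≤ x) => ?_)
  obtain ⟨q, hxq, hdq⟩ : ∃ q, wayBelow x q ∧ ¬ d ≤ q := by
    by_contra! hall
    exact hx ((h.2.2 x).2.2 hall)
  obtain ⟨S, hS, ⟨p, hp⟩, -⟩ := h.1 x
  exact ⟨p, q, hS hp, hxq, fun y _ hyq hdy => hdq (le_trans hdy hyq.le)⟩

theorem isClosed_Iic (h : Bicontinuous α) (d : α) : IsClosed[intervalTop α] (Iic d) := by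
  let _ := intervalTop α
  refine isOpen_compl_iff.1 (isOpen_intervalTop_of_forall fun x (hx : ¬ x ≤ d) => ?_)
  obtain ⟨S, hS, -, -, hxS⟩ := h.1 x
  obtain ⟨p, hp, hpd⟩ : ∃ p ∈ S, ¬ p ≤ d := by
    by_contra! hall
    exact hx (hxS.2 hall)
  obtain ⟨q, hxq⟩ := h.exists_wayBelow x
  exact ⟨p, q, hS hp, hxq, fun y hpy _ hyd => hpd (le_trans hpy.le hyd)⟩

end Bicontinuous

section CompactIcc

variable {α : Type*} [TopologicalSpace α] [Preorder α] [ClosedIciTopology α]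
  [ClosedIicTopology α] [CompactIccSpace α] {D : Set α}

theorem DirectedOn.exists_isLUB (hdir : DirectedOn (· ≤ ·) D) (hne : D.Nonempty)
    (hbdd : BddAbove D) : ∃ e, IsLUB D e := by
  obtain ⟨d₀, hd₀⟩ := hne
  obtain ⟨b, hb⟩ := hbdd
  have := hdir.isDirectedOrder
  have : Nonempty D := ⟨⟨d₀, hd₀⟩⟩
  have hge : ∀ d ∈ D, Ici d ∈ map Subtype.val (atTop : Filter D) := fun d hd =>
    mem_map.2 (Ici_mem_atTop (⟨d, hd⟩ : D))
  have hIcc : map Subtype.val (atTop : Filter D) ≤ 𝓟 (Icc d₀ b) :=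
    le_principal_iff.2 (mem_map.2 (mem_of_superset (Ici_mem_atTop (⟨d₀, hd₀⟩ : D))
      fun y hy => ⟨hy, hb y.2⟩))
  obtain ⟨e, -, he⟩ := isCompact_Icc.exists_clusterPt hIcc
  refine ⟨e, fun d hd => ?_, fun u hu => ?_⟩
  · exact isClosed_Ici.closure_subset (he.mem_closure_of_mem _ (hge d hd))
  · exact isClosed_Iic.closure_subset
      (he.mem_closure_of_mem _ (mem_map.2 (univ_mem' fun y => hu y.2)))

theorem DirectedOn.exists_isGLB (hdir : DirectedOn (· ≥ ·) D) (hne : D.Nonempty)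
    (hbdd : BddBelow D) : ∃ e, IsGLB D e :=
  DirectedOn.exists_isLUB (α := αᵒᵈ) hdir hne hbdd

end CompactIcc

namespace IX

variable {α : Type*} [PartialOrder α]

theorem directedOn_image_fst {S : Set (IX α)} (hS : DirectedOn (· ≤ ·) S) :
    DirectedOn (· ≤ ·) ((·.1.1) '' S) :=
  directedOn_image.2 (hS.mono fun _ _ h => h.1)

theorem directedOn_image_snd {S : Set (IX α)} (hS : DirectedOn (· ≤ ·) S) :
    DirectedOn (· ≥ ·) ((·.1.2) '' S) :=
  directedOn_image.2 (hS.mono fun _ _ h => h.2)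

theorem isLUB_of_isLUB_fst_of_isGLB_snd {S : Set (IX α)} {q : IX α}
    (hfst : IsLUB ((·.1.1) '' S) q.1.1) (hsnd : IsGLB ((·.1.2) '' S) q.1.2) : IsLUB S q :=
  ⟨fun s hs => ⟨hfst.1 ⟨s, hs, rfl⟩, hsnd.1 ⟨s, hs, rfl⟩⟩, fun _ hu =>
    ⟨hfst.2 (forall_mem_image.2 fun _ hs => (hu hs).1),
      hsnd.2 (forall_mem_image.2 fun _ hs => (hu hs).2)⟩⟩

theorem exists_directedOn_isLUB {A B : Set α} {q : IX α} (hAne : A.Nonempty)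
    (hBne : B.Nonempty) (hAdir : DirectedOn (· ≤ ·) A) (hBdir : DirectedOn (· ≥ ·) B)
    (hA : IsLUB A q.1.1) (hB : IsGLB B q.1.2) :
    ∃ F : Set (IX α), (∀ z ∈ F, z.1.1 ∈ A ∧ z.1.2 ∈ B) ∧ F.Nonempty ∧
      DirectedOn (· ≤ ·) F ∧ IsLUB F q := by
  have hAB : ∀ a ∈ A, ∀ b ∈ B, a ≤ b := fun a ha b hb =>
    (hA.1 ha).trans (q.2.trans (hB.1 hb))
  obtain ⟨a₀, ha₀⟩ := hAne
  obtain ⟨b₀, hb₀⟩ := hBne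
  set F : Set (IX α) := {z | z.1.1 ∈ A ∧ z.1.2 ∈ B}
  have hfst : (·.1.1) '' F = A := (image_subset_iff.2 fun _ hz => hz.1).antisymm
    fun a ha => ⟨⟨(a, b₀), hAB a ha b₀ hb₀⟩, ⟨ha, hb₀⟩, rfl⟩
  have hsnd : (·.1.2) '' F = B := (image_subset_iff.2 fun _ hz => hz.2).antisymm
    fun b hb => ⟨⟨(a₀, b), hAB a₀ ha₀ b hb⟩, ⟨ha₀, hb⟩, rfl⟩
  refine ⟨F, fun _ hz => hz, ⟨⟨(a₀, b₀), hAB a₀ ha₀ b₀ hb₀⟩, ha₀, hb₀⟩, ?_,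
    isLUB_of_isLUB_fst_of_isGLB_snd (hfst ▸ hA) (hsnd ▸ hB)⟩
  rintro z₁ ⟨ha₁, hb₁⟩ z₂ ⟨ha₂, hb₂⟩
  obtain ⟨a, ha, ha₁a, ha₂a⟩ := hAdir _ ha₁ _ ha₂
  obtain ⟨b, hb, hb₁b, hb₂b⟩ := hBdir _ hb₁ _ hb₂
  exact ⟨⟨(a, b), hAB a ha b hb⟩, ⟨ha, hb⟩, ⟨ha₁a, hb₁b⟩, ⟨ha₂a, hb₂b⟩⟩

end IX

section Intervals

variable {α : Type*} [PartialOrder α]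

theorem Bicontinuous.IX_exists_approx (h : Bicontinuous α) (q : IX α) :
    ∃ F : Set (IX α), (∀ z ∈ F, wayBelow z.1.1 q.1.1 ∧ wayBelow q.1.2 z.1.2) ∧
      F.Nonempty ∧ DirectedOn (· ≤ ·) F ∧ IsLUB F q := by
  obtain ⟨A, hA, hAne, hAdir, hAlub⟩ := h.1 q.1.1
  obtain ⟨hBdir, hBglb⟩ := h.2.2 q.1.2
  obtain ⟨F, hF, hFne, hFdir, hFlub⟩ :=
    IX.exists_directedOn_isLUB hAne (h.exists_wayBelow q.1.2) hAdir hBdir hAlub hBglb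
  exact ⟨F, fun z hz => ⟨hA (hF z hz).1, (hF z hz).2⟩, hFne, hFdir, hFlub⟩

theorem GloballyHyperbolic.IX_exists_isLUB (h : GloballyHyperbolic α) {S : Set (IX α)}
    (hne : S.Nonempty) (hdir : DirectedOn (· ≤ ·) S) :
    ∃ D : IX α, IsLUB S D ∧ IsLUB ((·.1.1) '' S) D.1.1 ∧ IsGLB ((·.1.2) '' S) D.1.2 := by
  let _ := intervalTop α
  have : ClosedIciTopology α := ⟨h.1.isClosed_Ici⟩
  have : ClosedIicTopology α := ⟨h.1.isClosed_Iic⟩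
  have : CompactIccSpace α := ⟨fun {a b} => h.2 a b⟩
  have hle : ∀ s ∈ S, ∀ t ∈ S, s.1.1 ≤ t.1.2 := fun s hs t ht =>
    let ⟨z, _, hsz, htz⟩ := hdir s hs t ht
    hsz.1.trans (z.2.trans htz.2)
  obtain ⟨s₀, hs₀⟩ := hne
  obtain ⟨e, he⟩ := (IX.directedOn_image_fst hdir).exists_isLUB ⟨_, mem_image_of_mem _ hs₀⟩
    ⟨s₀.1.2, forall_mem_image.2 fun s hs => hle s hs s₀ hs₀⟩
  obtain ⟨f, hf⟩ := (IX.directedOn_image_snd hdir).exists_isGLB ⟨_, mem_image_of_mem _ hs₀⟩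
    ⟨s₀.1.1, forall_mem_image.2 fun t ht => hle s₀ hs₀ t ht⟩
  have hef : e ≤ f := hf.2 <| forall_mem_image.2 fun t ht =>
    he.2 <| forall_mem_image.2 fun s hs => hle s hs t ht
  exact ⟨⟨(e, f), hef⟩, IX.isLUB_of_isLUB_fst_of_isGLB_snd he hf, he, hf⟩

theorem GloballyHyperbolic.IX_wayBelow_iff (h : GloballyHyperbolic α) {p q : IX α} :
    wayBelow p q ↔ wayBelow p.1.1 q.1.1 ∧ wayBelow q.1.2 p.1.2 := by
  constructor
  · intro hpq
    obtain ⟨F, hF, hFne, hFdir, hFlub⟩ := h.1.IX_exists_approx q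
    obtain ⟨z, hz, hpz⟩ := hpq F hFne hFdir q hFlub le_rfl
    exact ⟨(hF z hz).1.mono hpz.1 le_rfl, (hF z hz).2.mono le_rfl hpz.2⟩
  · rintro ⟨hfst, hsnd⟩ S hne hdir D hD hqD
    obtain ⟨D', hD', hD'fst, hD'snd⟩ := h.IX_exists_isLUB hne hdir
    obtain rfl := hD.unique hD'
    obtain ⟨_, ⟨s, hs, rfl⟩, hps⟩ :=
      hfst _ (hne.image _) (IX.directedOn_image_fst hdir) _ hD'fst hqD.1
    obtain ⟨_, ⟨t, ht, rfl⟩, htp⟩ := (h.1.2.1 q.1.2 p.1.2).1 hsnd _ (hne.image _)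
      (IX.directedOn_image_snd hdir) _ hD'snd hqD.2
    obtain ⟨z, hz, hsz, htz⟩ := hdir s hs t ht
    exact ⟨z, hz, hps.trans hsz.1, htz.2.trans htp⟩

end Intervals

/-- way-below in `IX` is `[a,b] ≪ [c,d] ↔ a ≪ c ∧ d ≪ b`, and `IX`
is a continuous dcpo. -/
theorem IX_wayBelow_and_continuous {α : Type*} [PartialOrder α]
    (h : GloballyHyperbolic α) :
    (∀ p q : IX α, wayBelow p q ↔ wayBelow p.1.1 q.1.1 ∧ wayBelow q.1.2 p.1.2) ∧
    (∀ S : Set (IX α), S.Nonempty → DirectedOn (· ≤ ·) S → ∃ d : IX α, IsLUB S d) ∧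
    ContinuousPoset (IX α) := by
  refine ⟨fun p q => h.IX_wayBelow_iff, fun S hne hdir => ?_, fun q => ?_⟩
  · obtain ⟨D, hD, -⟩ := h.IX_exists_isLUB hne hdir
    exact ⟨D, hD⟩
  · obtain ⟨F, hF, hFne, hFdir, hFlub⟩ := h.1.IX_exists_approx q
    exact ⟨F, fun z hz => h.IX_wayBelow_iff.2 (hF z hz), hFne, hFdir, hFlub⟩
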